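/- Let n ≥ 3 be an integer. For k ∈ ℕ, k ≥ 1, let μ_k be the probability measure on ℝⁿ given by k times one-dimensional Hausdorff measure restricted to the segment (0, 1/k) × {0}^{n−1} on the x₁-axis. Then: (i) W_{−1}(x) = (x₂² + … + xₙ²)/|x|ⁿ for every x ≠ 0; (ii) μ_k converges narrowly to the Dirac delta δ₀ at the origin as k → +∞; (iii) lim_{k→+∞} I_{−1}(μ_k) = 0, while I_{−1}(δ₀) = +∞. In particular, I_{−1} is not lower semicontinuous with respect to narrow convergence. -/

import Mathlib

open MeasureTheory Set Filter Topology
open scoped ENNReal NNReal Real BigOperators RealInnerProductSpace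

noncomputable section

attribute [local instance] Classical.propDecidable

/-- `ℝⁿ` as a Euclidean space. -/
abbrev Euc (n : ℕ) := EuclideanSpace ℝ (Fin n)

/-- The anisotropic interaction kernel `W_α`, with values in `[0,+∞]`:
`W_α(x) = 1/|x|^(n-2) + α x₁²/|x|ⁿ` for `x ≠ 0`, and `W_α(0) = +∞`. -/
def kerW (n : ℕ) [NeZero n] (α : ℝ) (x : Euc n) : ℝ≥0∞ :=
  if x = 0 then ⊤
  else ENNReal.ofReal (1 / ‖x‖ ^ (n - 2) + α * (x 0) ^ 2 / ‖x‖ ^ n)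

/-- The nonlocal energy `I_α(μ) = ∬ W_α(x-y) dμ(x)dμ(y) + ∫ |x|² dμ(x)`. -/
def energyI (n : ℕ) [NeZero n] (α : ℝ) (μ : Measure (Euc n)) : ℝ≥0∞ :=
  (∫⁻ p : Euc n × Euc n, kerW n α (p.1 - p.2) ∂(μ.prod μ)) +
    ∫⁻ x, ENNReal.ofReal (‖x‖ ^ 2) ∂μ


/-- The open segment `(0, 1/k) × {0}^{n-1}` on the `x₁`-axis. -/
def seg (n : ℕ) [NeZero n] (k : ℕ) : Set (Euc n) :=
  {x | x 0 ∈ Ioo (0 : ℝ) (1 / k) ∧ ∀ i : Fin n, i ≠ 0 → x i = 0}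

/-- The measure `μ_k = k ⋅ H¹ ↾ ((0,1/k) × {0}^{n-1})`. -/
def segMeas (n : ℕ) [NeZero n] (k : ℕ) : Measure (Euc n) :=
  (k : ℝ≥0∞) • (μH[1] : Measure (Euc n)).restrict (seg n k)

namespace S17

variable (n : ℕ) [NeZero n]

def emb : ℝ → Euc n := fun t => EuclideanSpace.single (0 : Fin n) t

lemma emb_isometry : Isometry (emb n) :=
  Isometry.of_dist_eq fun a b => EuclideanSpace.dist_single_same 0 a b

lemma emb_zero : emb n 0 = 0 := by
  have : ‖emb n 0‖ = 0 := by
    rw [emb, EuclideanSpace.norm_single]; simp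
  exact norm_eq_zero.mp this

lemma seg_eq (k : ℕ) : seg n k = emb n '' Ioo (0:ℝ) (1/k) := by
  ext x
  constructor
  · rintro ⟨h0, hi⟩
    refine ⟨x 0, h0, ?_⟩
    ext i
    rcases eq_or_ne i 0 with rfl | hne
    · simp [emb, EuclideanSpace.single_apply]
    · simp [emb, EuclideanSpace.single_apply, hne, hi i hne]
  · rintro ⟨t, ht, rfl⟩
    constructor
    · simpa [emb, EuclideanSpace.single_apply] using ht
    · intro i hi
      simp [emb, EuclideanSpace.single_apply, hi]

lemma mem_seg_eq_emb {k : ℕ} {x : Euc n} (hx : x ∈ seg n k) : x = emb n (x 0) := by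
  rw [seg_eq] at hx
  obtain ⟨t, ht, rfl⟩ := hx
  have : emb n t 0 = t := by simp [emb, EuclideanSpace.single_apply]
  rw [this]

lemma norm_of_mem_seg {k : ℕ} {x : Euc n} (hx : x ∈ seg n k) : ‖x‖ < 1 / k := by
  have h0 := hx.1
  have := mem_seg_eq_emb n hx
  rw [this, emb, EuclideanSpace.norm_single]
  rw [Real.norm_eq_abs, abs_of_pos h0.1]
  exact h0.2

lemma hausdorff_seg (k : ℕ) : (μH[1] : Measure (Euc n)) (seg n k) = ENNReal.ofReal (1/k) := by
  rw [seg_eq, (emb_isometry n).hausdorffMeasure_image (Or.inl zero_le_one),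
    hausdorffMeasure_real, Real.volume_Ioo]
  simp

lemma hausdorff_singleton (x : Euc n) : (μH[1] : Measure (Euc n)) {x} = 0 := by
  set g : ℝ → Euc n := fun t => x + emb n t with hg
  have hiso : Isometry g := by
    intro a b
    simp only [hg, edist_add_left]
    exact (emb_isometry n) a b
  have himg : g '' ({0} : Set ℝ) = {x} := by
    simp [hg, emb_zero]
  rw [← himg, hiso.hausdorffMeasure_image (Or.inl zero_le_one),
    hausdorffMeasure_real]
  simp


variable (n : ℕ) [NeZero n]

lemma seg_measurable (k : ℕ) : MeasurableSet (seg n k) := by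
  have h1 : MeasurableSet {x : Euc n | x 0 ∈ Ioo (0:ℝ) (1/k)} :=
    ((measurable_pi_apply (0 : Fin n)).comp (WithLp.measurable_ofLp 2 _)) measurableSet_Ioo
  have h2 : MeasurableSet {x : Euc n | ∀ i : Fin n, i ≠ 0 → x i = 0} := by
    have he : {x : Euc n | ∀ i : Fin n, i ≠ 0 → x i = 0}
        = ⋂ i : Fin n, ⋂ _ : i ≠ 0, {x : Euc n | x i = 0} := by
      ext x; simp
    rw [he]
    exact MeasurableSet.iInter fun i => MeasurableSet.iInter fun _ =>
      ((measurable_pi_apply i).comp (WithLp.measurable_ofLp 2 _)) (measurableSet_singleton 0)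
  exact h1.inter h2

lemma kerW_neg_one (hn : 3 ≤ n) (x : Euc n) (hx : x ≠ 0) :
    kerW n (-1) x = ENNReal.ofReal
      ((∑ i ∈ Finset.univ.erase (0 : Fin n), (x i) ^ 2) / ‖x‖ ^ n) := by
  rw [kerW, if_neg hx]
  congr 1
  have hr : (0:ℝ) < ‖x‖ := norm_pos_iff.2 hx
  have hsum : ∑ i, (x i)^2 = ‖x‖^2 := by
    rw [EuclideanSpace.norm_eq, Real.sq_sqrt (by positivity)]
    simp [Real.norm_eq_abs, sq_abs]
  rw [Finset.sum_erase_eq_sub (Finset.mem_univ (0 : Fin n)), hsum]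
  have hpow : ‖x‖^n = ‖x‖^(n-2) * ‖x‖^2 := by
    rw [← pow_add, Nat.sub_add_cancel (by omega)]
  field_simp [hpow]
  rw [hpow]; ring

lemma kerW_axis_zero (hn : 3 ≤ n) (x : Euc n) (hx : x ≠ 0)
    (h : ∀ i : Fin n, i ≠ 0 → x i = 0) : kerW n (-1) x = 0 := by
  rw [kerW_neg_one n hn x hx]
  have : ∑ i ∈ Finset.univ.erase (0 : Fin n), (x i) ^ 2 = 0 :=
    Finset.sum_eq_zero fun i hi => by
      rw [h i (Finset.mem_erase.mp hi).1]; ring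
  simp [this]

end S17
namespace S17b
open MeasureTheory Set Filter Topology S17
open scoped ENNReal

variable (n : ℕ) [NeZero n]

lemma segMeas_univ (k : ℕ) :
    segMeas n k Set.univ = (k : ℝ≥0∞) * ENNReal.ofReal (1/k) := by
  rw [segMeas, Measure.smul_apply, Measure.restrict_apply_univ, S17.hausdorff_seg]
  rfl

instance segMeas_finite (k : ℕ) : IsFiniteMeasure (segMeas n k) :=
  ⟨by rw [segMeas_univ]; exact ENNReal.mul_lt_top (by simp) (by simp)⟩

lemma segMeas_prob {k : ℕ} (hk : 1 ≤ k) : IsProbabilityMeasure (segMeas n k) := by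
  constructor
  rw [segMeas_univ]
  have hk0 : (0:ℝ) < k := by exact_mod_cast hk
  rw [one_div, ENNReal.ofReal_inv_of_pos hk0, ENNReal.ofReal_natCast]
  exact ENNReal.mul_inv_cancel (by positivity) (by simp)

lemma segMeas_singleton (k : ℕ) (x : Euc n) : segMeas n k {x} = 0 := by
  rw [segMeas, Measure.smul_apply, Measure.restrict_apply (measurableSet_singleton x)]
  have : (μH[1] : Measure (Euc n)) ({x} ∩ seg n k) = 0 :=
    le_antisymm (le_trans (measure_mono Set.inter_subset_left)
      (le_of_eq (S17.hausdorff_singleton n x))) zero_le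
  rw [this]; simp

lemma segMeas_compl_seg (k : ℕ) : segMeas n k (seg n k)ᶜ = 0 := by
  rw [segMeas, Measure.smul_apply,
    Measure.restrict_apply (S17.seg_measurable n k).compl]
  simp

lemma ae_mem_seg (k : ℕ) : ∀ᵐ x ∂(segMeas n k), x ∈ seg n k :=
  (MeasureTheory.ae_iff.2 (segMeas_compl_seg n k))

lemma prod_diag_zero (k : ℕ) :
    (segMeas n k).prod (segMeas n k) {p : Euc n × Euc n | p.1 = p.2} = 0 := by
  have hmeas : MeasurableSet {p : Euc n × Euc n | p.1 = p.2} :=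
    measurableSet_eq_fun measurable_fst measurable_snd
  rw [Measure.prod_apply hmeas]
  have : ∀ x : Euc n, segMeas n k (Prod.mk x ⁻¹' {p : Euc n × Euc n | p.1 = p.2}) = 0 := by
    intro x
    have : (Prod.mk x ⁻¹' {p : Euc n × Euc n | p.1 = p.2}) = {x} := by
      ext y; simp [eq_comm]
    rw [this]; exact segMeas_singleton n k x
  simp only [this]
  exact lintegral_zero

lemma ae_prod_mem (k : ℕ) :
    ∀ᵐ p : Euc n × Euc n ∂((segMeas n k).prod (segMeas n k)),
      p.1 ∈ seg n k ∧ p.2 ∈ seg n k ∧ p.1 ≠ p.2 := by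
  have h1 : ∀ᵐ p : Euc n × Euc n ∂((segMeas n k).prod (segMeas n k)), p.1 ∈ seg n k := by
    rw [MeasureTheory.ae_iff]
    have : {p : Euc n × Euc n | ¬ p.1 ∈ seg n k} = (seg n k)ᶜ ×ˢ Set.univ := by
      ext p; simp [Set.mem_prod]
    rw [this, Measure.prod_prod, segMeas_compl_seg]
    simp
  have h2 : ∀ᵐ p : Euc n × Euc n ∂((segMeas n k).prod (segMeas n k)), p.2 ∈ seg n k := by
    rw [MeasureTheory.ae_iff]
    have : {p : Euc n × Euc n | ¬ p.2 ∈ seg n k} = Set.univ ×ˢ (seg n k)ᶜ := by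
      ext p; simp [Set.mem_prod]
    rw [this, Measure.prod_prod, segMeas_compl_seg]
    simp
  have h3 : ∀ᵐ p : Euc n × Euc n ∂((segMeas n k).prod (segMeas n k)), p.1 ≠ p.2 := by
    rw [MeasureTheory.ae_iff]
    simpa using prod_diag_zero n k
  exact (h1.and (h2.and h3))

lemma interaction_zero (hn : 3 ≤ n) (k : ℕ) :
    ∫⁻ p : Euc n × Euc n, kerW n (-1) (p.1 - p.2)
      ∂((segMeas n k).prod (segMeas n k)) = 0 := by
  have h : ∀ᵐ p : Euc n × Euc n ∂((segMeas n k).prod (segMeas n k)),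
      kerW n (-1) (p.1 - p.2) = 0 := by
    filter_upwards [ae_prod_mem n k] with p hp
    obtain ⟨h1, h2, hne⟩ := hp
    refine S17.kerW_axis_zero n hn _ (sub_ne_zero.2 hne) ?_
    intro i hi
    have : (p.1 - p.2) i = p.1 i - p.2 i := rfl
    rw [this, h1.2 i hi, h2.2 i hi, sub_zero]
  calc ∫⁻ p : Euc n × Euc n, kerW n (-1) (p.1 - p.2) ∂((segMeas n k).prod (segMeas n k))
      = ∫⁻ _ : Euc n × Euc n, 0 ∂((segMeas n k).prod (segMeas n k)) := lintegral_congr_ae h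
    _ = 0 := lintegral_zero

end S17b
/-- (i) `W₋₁(x) = (x₂²+⋯+xₙ²)/|x|ⁿ` for `x ≠ 0`; the `μ_k` are probability
measures; (ii) `μ_k → δ₀` narrowly; (iii) `I₋₁(μ_k) → 0` while `I₋₁(δ₀) = +∞`
(so `I₋₁` is not narrowly lower semicontinuous). -/
theorem statement17 (n : ℕ) [NeZero n] (hn : 3 ≤ n) :
    (∀ x : Euc n, x ≠ 0 →
      kerW n (-1) x = ENNReal.ofReal
        ((∑ i ∈ Finset.univ.erase (0 : Fin n), (x i) ^ 2) / ‖x‖ ^ n)) ∧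
    (∀ k : ℕ, 1 ≤ k → IsProbabilityMeasure (segMeas n k)) ∧
    (∀ f : BoundedContinuousFunction (Euc n) ℝ,
      Tendsto (fun k : ℕ => ∫ x, f x ∂(segMeas n k)) atTop (𝓝 (f 0))) ∧
    Tendsto (fun k : ℕ => energyI n (-1) (segMeas n k)) atTop (𝓝 0) ∧
    energyI n (-1) (Measure.dirac (0 : Euc n)) = ⊤ := by
  refine ⟨fun x hx => S17.kerW_neg_one n hn x hx,
    fun k hk => S17b.segMeas_prob n hk, ?_, ?_, ?_⟩
  · -- narrow convergence
    intro f
    rw [Metric.tendsto_atTop]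
    intro ε hε
    have hc : ContinuousAt (f : Euc n → ℝ) 0 := f.continuous.continuousAt
    obtain ⟨δ, hδ, hδ'⟩ := Metric.continuousAt_iff.1 hc (ε/2) (by linarith)
    obtain ⟨N, hN⟩ := exists_nat_one_div_lt hδ
    refine ⟨N + 1, fun k hk => ?_⟩
    have hk1 : 1 ≤ k := le_trans (Nat.le_add_left 1 N) hk
    haveI := S17b.segMeas_prob n hk1
    have hint : Integrable (f : Euc n → ℝ) (segMeas n k) := f.integrable _
    have hbound : ∀ᵐ x ∂(segMeas n k), ‖f x - f 0‖ ≤ ε/2 := by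
      filter_upwards [S17b.ae_mem_seg n k] with x hx
      have h1k : (1:ℝ)/k ≤ 1/(N+1) :=
        one_div_le_one_div_of_le (by positivity) (by exact_mod_cast hk)
      have hxd : dist x 0 < δ := by
        rw [dist_zero_right]
        exact lt_of_lt_of_le (lt_of_lt_of_le (S17.norm_of_mem_seg n hx) h1k) hN.le
      have := hδ' hxd
      rw [Real.dist_eq] at this
      exact le_of_lt (by simpa [abs_sub_comm] using this)
    have hkey := norm_integral_le_of_norm_le_const (μ := segMeas n k) hbound
    rw [probReal_univ, mul_one] at hkey
    have hsub : ∫ x, (f x - f 0) ∂(segMeas n k)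
        = (∫ x, f x ∂(segMeas n k)) - f 0 := by
      rw [integral_sub hint (integrable_const _), integral_const, probReal_univ]
      simp
    rw [hsub] at hkey
    rw [dist_eq_norm]
    exact lt_of_le_of_lt hkey (by linarith)
  · -- energy tends to 0
    have hub : ∀ k : ℕ, 1 ≤ k →
        energyI n (-1) (segMeas n k) ≤ ENNReal.ofReal ((1/(k:ℝ))^2) := by
      intro k hk
      haveI := S17b.segMeas_prob n hk
      rw [energyI, S17b.interaction_zero n hn k, zero_add]
      calc ∫⁻ x, ENNReal.ofReal (‖x‖^2) ∂(segMeas n k)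
          ≤ ∫⁻ _, ENNReal.ofReal ((1/(k:ℝ))^2) ∂(segMeas n k) := by
            refine lintegral_mono_ae ?_
            filter_upwards [S17b.ae_mem_seg n k] with x hx
            refine ENNReal.ofReal_le_ofReal ?_
            have h1 := S17.norm_of_mem_seg n hx
            have h0 : 0 ≤ ‖x‖ := norm_nonneg x
            nlinarith
        _ = ENNReal.ofReal ((1/(k:ℝ))^2) := by
            rw [lintegral_const, measure_univ, mul_one]
    have hlim : Tendsto (fun k : ℕ => ENNReal.ofReal ((1/(k:ℝ))^2)) atTop (𝓝 0) := by
      have h1 : Tendsto (fun k : ℕ => (1/(k:ℝ))^2) atTop (𝓝 0) := by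
        have h := (tendsto_one_div_atTop_nhds_zero_nat (𝕜 := ℝ)).pow 2
        rwa [zero_pow two_ne_zero] at h
      have h := (ENNReal.continuous_ofReal.tendsto 0).comp h1
      rwa [ENNReal.ofReal_zero] at h
    refine tendsto_of_tendsto_of_tendsto_of_le_of_le' tendsto_const_nhds hlim
      (Eventually.of_forall fun k => zero_le) ?_
    filter_upwards [eventually_ge_atTop 1] with k hk using hub k hk
  · -- dirac energy is ⊤
    rw [energyI, Measure.dirac_prod_dirac, lintegral_dirac]
    simp [kerW]
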